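/- arXiv:2207.01915 — 3 statements merged into one kernel-verified Lean document; each statement's English description precedes it below -/
import Mathlib

section
/- Let A be a positive (self-adjoint, nonnegative) bounded operator on a complex Hilbert space H and φ a convex continuous function on [0,∞) containing the spectrum of A. Then for every unit vector x ∈ H, φ(⟨Ax,x⟩) ≤ ⟨φ(A)x,x⟩ (operator Jensen inequality). -/
/-!
At `t₀ = ⟨Ax, x⟩ > 0` the convex function `φ` has a supporting line
`ℓ t = φ t₀ + c (t - t₀)` (take `c` the right derivative at `t₀`). Since `ℓ ≤ φ` on the spectrum,
`ℓ(A) ≤ φ(A)`, and pairing with the unit vector `x` gives `φ t₀ = ⟨ℓ(A)x, x⟩ ≤ ⟨φ(A)x, x⟩`.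
At `t₀ = 0` there may be no supporting line (e.g. `φ t = -√t`), but then positivity of `A`
forces `Ax = 0`, hence `φ(A)x = φ(0)x`.
-/

/-- The numerical radius of a bounded operator on a complex Hilbert space. -/
noncomputable def numRad {H : Type*} [NormedAddCommGroup H] [InnerProductSpace ℂ H]
    (A : H →L[ℂ] H) : ℝ :=
  ⨆ x : {x : H // ‖x‖ = 1}, ‖(inner ℂ (A x.1) x.1 : ℂ)‖

/-- The modulus `|A| = (A*A)^{1/2}`, via continuous functional calculus. -/
noncomputable def absOp {H : Type*} [NormedAddCommGroup H] [InnerProductSpace ℂ H]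
    [CompleteSpace H] (A : H →L[ℂ] H) : H →L[ℂ] H :=
  cfc Real.sqrt (ContinuousLinearMap.adjoint A * A)

variable {H : Type*} [NormedAddCommGroup H] [InnerProductSpace ℂ H] [CompleteSpace H]

open Set

theorem ConvexOn.add_rightDeriv_mul_sub_le {S : Set ℝ} {f : ℝ → ℝ} (hf : ConvexOn ℝ S f)
    {x y : ℝ} (hx : x ∈ interior S) (hy : y ∈ S) :
    f x + derivWithin f (Ioi x) x * (y - x) ≤ f y := by
  rcases lt_trichotomy y x with hyx | rfl | hxy
  · have hslope : slope f y x ≤ derivWithin f (Ioi x) x :=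
      (hf.slope_le_leftDeriv_of_mem_interior hy hx hyx).trans
        (hf.leftDeriv_le_rightDeriv_of_mem_interior hx)
    rw [slope_def_field, div_le_iff₀ (sub_pos.mpr hyx)] at hslope
    linarith
  · simp
  · have hslope : derivWithin f (Ioi x) x ≤ slope f x y :=
      hf.rightDeriv_le_slope_of_mem_interior hx hy hxy
    rw [slope_def_field, le_div_iff₀ (sub_pos.mpr hxy)] at hslope
    linarith

section

variable {E : Type*} [NormedAddCommGroup E] [InnerProductSpace ℂ E]

theorem re_inner_real_smul_left (r : ℝ) (x y : E) :
    (inner ℂ (r • x) y).re = r * (inner ℂ x y).re := by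
  rw [RCLike.real_smul_eq_coe_smul (K := ℂ), inner_smul_real_left, Complex.real_smul,
    Complex.re_ofReal_mul]

theorem mem_spectrum_of_apply_eq_smul {A : E →L[ℂ] E} {μ : ℝ} {x : E} (hx₀ : x ≠ 0)
    (hx : A x = μ • x) : μ ∈ spectrum ℝ A := by
  rintro ⟨u, hu⟩
  apply hx₀
  have hux : (u : E →L[ℂ] E) x = 0 := by
    rw [hu, sub_apply, hx, Algebra.algebraMap_eq_smul_one, smul_apply, one_apply_eq_self,
      sub_self]
  calc x = ((u⁻¹ * u : (E →L[ℂ] E)ˣ) : E →L[ℂ] E) x := by rw [inv_mul_cancel]; rfl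
    _ = 0 := by rw [Units.val_mul, mul_apply_eq_comp, hux, map_zero]

theorem IsSelfAdjoint.cfcHom_apply_of_apply_eq_smul [CompleteSpace E] {A : E →L[ℂ] E}
    (hA : IsSelfAdjoint A) {μ : ℝ} (hμ : μ ∈ spectrum ℝ A) {x : E} (hx : A x = μ • x) (g : C(spectrum ℝ A, ℝ)) :
    cfcHom hA g x = g ⟨μ, hμ⟩ • x := by
  induction g using ContinuousMap.induction_on_of_compact with
  | const r =>
    change cfcHom hA (algebraMap ℝ _ r) x = _
    simp [Algebra.algebraMap_eq_smul_one]
  | id => simp [cfcHom_id hA, hx]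
  | star_id => simp [cfcHom_id hA, hx]
  | add f g hf hg => simp [hf, hg, add_smul]
  | mul f g hf hg => simp [hf, hg, smul_smul, mul_comm]
  | frequently f hf =>
    have hclosed : IsClosed {g : C(spectrum ℝ A, ℝ) | cfcHom hA g x = g ⟨μ, hμ⟩ • x} :=
      isClosed_eq ((ContinuousLinearMap.apply ℂ E x).continuous.comp
        (cfcHom_isClosedEmbedding hA).continuous) (by fun_prop)
    exact hclosed.closure_subset (mem_closure_iff_frequently.mpr hf)

theorem IsSelfAdjoint.cfc_apply_of_apply_eq_smul [CompleteSpace E] {A : E →L[ℂ] E}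
    (hA : IsSelfAdjoint A) {f : ℝ → ℝ} (hf : ContinuousOn f (spectrum ℝ A)) {μ : ℝ} {x : E}
    (hx : A x = μ • x) :
    cfc f A x = f μ • x := by
  rcases eq_or_ne x 0 with rfl | hx₀
  · simp
  rw [cfc_apply f A hA hf,
    hA.cfcHom_apply_of_apply_eq_smul (mem_spectrum_of_apply_eq_smul hx₀ hx) hx]
  rfl

theorem apply_eq_zero_of_re_inner_eq_zero [CompleteSpace E] {A : E →L[ℂ] E} (hA : 0 ≤ A)
    {x : E} (h : (inner ℂ (A x) x).re = 0) : A x = 0 := by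
  obtain ⟨B, rfl⟩ := CStarAlgebra.nonneg_iff_eq_star_mul_self.mp hA
  have hBx : B x = 0 := by
    rw [ContinuousLinearMap.star_eq_adjoint, mul_apply_eq_comp,
      ContinuousLinearMap.adjoint_inner_left, inner_self_eq_norm_sq_to_K] at h
    exact_mod_cast norm_eq_zero.mp (pow_eq_zero_iff two_ne_zero |>.mp (by exact_mod_cast h))
  rw [mul_apply_eq_comp, hBx, map_zero]

theorem re_inner_le_re_inner_of_le {B C : E →L[ℂ] E} (h : B ≤ C) (x : E) :
    (inner ℂ (B x) x).re ≤ (inner ℂ (C x) x).re := by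
  have := ((ContinuousLinearMap.le_def B C).mp h).re_inner_nonneg_left x
  rwa [sub_apply, inner_sub_left, map_sub, sub_nonneg] at this

theorem IsSelfAdjoint.add_mul_re_inner_le_re_inner_cfc [CompleteSpace E] {A : E →L[ℂ] E}
    (hA : IsSelfAdjoint A) {φ : ℝ → ℝ} (hφ : ContinuousOn φ (spectrum ℝ A)) {a c : ℝ}
    (hle : ∀ t ∈ spectrum ℝ A, a + c * t ≤ φ t) {x : E} (hx : ‖x‖ = 1) :
    a + c * (inner ℂ (A x) x).re ≤ (inner ℂ (cfc φ A x) x).re := by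
  have haffine : cfc (fun t => a + c * t) A = algebraMap ℝ (E →L[ℂ] E) a + c • A := by
    rw [cfc_add (a := A) (fun _ => a) (fun t => c * t), cfc_const a A, cfc_const_mul_id c A]
  have hxx : (inner ℂ x x).re = 1 := by simp [hx]
  have := re_inner_le_re_inner_of_le
    (haffine ▸ cfc_mono hle (by fun_prop) hφ : algebraMap ℝ _ a + c • A ≤ cfc φ A) x
  rwa [add_apply, inner_add_left, Algebra.algebraMap_eq_smul_one, smul_apply, smul_apply,
    one_apply_eq_self, Complex.add_re, re_inner_real_smul_left, re_inner_real_smul_left,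
    hxx, mul_one] at this

end

theorem stmt5_general (A : H →L[ℂ] H) (hA : 0 ≤ A) (φ : ℝ → ℝ)
    (hconv : ConvexOn ℝ (Set.Ici 0) φ) (hcont : ContinuousOn φ (Set.Ici 0))
    (x : H) (hx : ‖x‖ = 1) :
    φ ((inner ℂ (A x) x : ℂ).re) ≤ ((inner ℂ ((cfc φ A) x) x : ℂ)).re := by
  have hspec : spectrum ℝ A ⊆ Ici 0 := fun _ ht => spectrum_nonneg_of_nonneg hA ht
  have hφ : ContinuousOn φ (spectrum ℝ A) := hcont.mono hspec
  have ht₀ : 0 ≤ (inner ℂ (A x) x).re :=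
    ((ContinuousLinearMap.nonneg_iff_isPositive A).mp hA).re_inner_nonneg_left x
  rcases ht₀.eq_or_lt with h0 | hpos
  · have hAx : A x = (0 : ℝ) • x := by
      rw [zero_smul, apply_eq_zero_of_re_inner_eq_zero hA h0.symm]
    rw [← h0, (IsSelfAdjoint.of_nonneg hA).cfc_apply_of_apply_eq_smul hφ hAx,
      re_inner_real_smul_left]
    simp [hx]
  · set t₀ := (inner ℂ (A x) x).re
    set c := derivWithin φ (Ioi t₀) t₀
    have hsupport : ∀ t ∈ spectrum ℝ A, φ t₀ - c * t₀ + c * t ≤ φ t := fun t ht => by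
      have := hconv.add_rightDeriv_mul_sub_le (by rwa [interior_Ici]) (hspec ht)
      linarith
    have := (IsSelfAdjoint.of_nonneg hA).add_mul_re_inner_le_re_inner_cfc hφ hsupport hx
    linarith

theorem stmt5 (A : H →L[ℂ] H) (hA : 0 ≤ A) (φ : ℝ → ℝ)
    (hconv : ConvexOn ℝ (Set.Ici 0) φ) (hcont : ContinuousOn φ (Set.Ici 0))
    (hspec : spectrum ℝ A ⊆ Set.Ici 0) (x : H) (hx : ‖x‖ = 1) :
    φ ((inner ℂ (A x) x : ℂ).re) ≤ ((inner ℂ ((cfc φ A) x) x : ℂ)).re :=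
  stmt5_general A hA φ hconv hcont x hx
end

section
/- Let A ∈ B(H) and φ an Orlicz function. Then φ(w(A)) ≤ (1/2)·‖φ(|A|) + φ(|A*|)‖, where w is the numerical radius. -/
/-!
Factoring `A = (A Q) P` with `P = u(A*A)^{1/2}` and `Q = P⁻¹` for a positive weight `u`,
Cauchy–Schwarz gives `2 |⟪Ax, x⟫| ≤ ⟪u(A*A) x, x⟫ + ⟪A u(A*A)⁻¹ A* x, x⟫`, and the intertwining
`A f(A*A) = f(AA*) A` turns the last operator into `(t / u t)(AA*)`. The weight `u t = √t + δ`
with `δ → 0` yields the mixed Schwarz inequality `2 |⟪Ax, x⟫| ≤ ⟪|A| x, x⟫ + ⟪|A*| x, x⟫` without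
a polar decomposition. For a unit vector `x`, monotonicity and convexity of `φ` followed by
Jensen's operator inequality `φ ⟪S x, x⟫ ≤ ⟪φ(S) x, x⟫` (tested against the affine minorants of
`φ`) bound `φ |⟪Ax, x⟫|` by `½ ⟪(φ(|A|) + φ(|A*|)) x, x⟫`, and continuity of `φ` passes the bound
to the supremum.
-/

/-- An Orlicz function: convex, continuous, non-decreasing on `[0, ∞)`,
vanishing at `0`, positive on `(0, ∞)`, and tending to infinity. -/
def IsOrliczFunction (φ : ℝ → ℝ) : Prop :=
  ConvexOn ℝ (Set.Ici 0) φ ∧ ContinuousOn φ (Set.Ici 0) ∧ MonotoneOn φ (Set.Ici 0) ∧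
    φ 0 = 0 ∧ (∀ u : ℝ, 0 < u → 0 < φ u) ∧ Filter.Tendsto φ Filter.atTop Filter.atTop

open Polynomial Filter Topology

theorem MonotoneOn.map_ciSup_le {ι : Sort*} [Nonempty ι] {g : ι → ℝ} {φ : ℝ → ℝ}
    (hmono : MonotoneOn φ (Set.Ici 0)) (hcont : ContinuousOn φ (Set.Ici 0)) (hg : ∀ i, 0 ≤ g i)
    (hbdd : BddAbove (Set.range g)) {C : ℝ} (h : ∀ i, φ (g i) ≤ C) : φ (⨆ i, g i) ≤ C := by
  have hrange : Set.range g ⊆ Set.Ici 0 := Set.range_subset_iff.mpr hg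
  have hsup : 0 ≤ ⨆ i, g i := (hg (Classical.arbitrary ι)).trans (le_ciSup hbdd _)
  rw [iSup, hmono.mono hrange |>.map_csSup_of_continuousWithinAt
    ((hcont _ hsup).mono hrange) (Set.range_nonempty g) hbdd]
  exact csSup_le ((Set.range_nonempty g).image φ) (by simpa using h)

section Intertwining

variable {𝒜 : Type*} [CStarAlgebra 𝒜]

theorem SemiconjBy.aeval {a x y : 𝒜} (h : SemiconjBy a x y) (p : ℝ[X]) :
    SemiconjBy a (aeval x p) (aeval y p) := by
  induction p using Polynomial.induction_on' with
  | add p q hp hq => simpa only [map_add] using hp.add_right hq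
  | monomial n c =>
    simp only [aeval_monomial]
    exact SemiconjBy.mul_right (Algebra.commute_algebraMap_right c a) (h.pow_right n)

theorem SemiconjBy.cfc_real {a x y : 𝒜} (hx : IsSelfAdjoint x) (hy : IsSelfAdjoint y)
    (h : SemiconjBy a x y) {f : ℝ → ℝ} (hf : Continuous f) :
    SemiconjBy a (cfc f x) (cfc f y) := by
  set K := spectrum ℝ x ∪ spectrum ℝ y
  have hK : K ⊆ Set.Icc (sInf K) (sSup K) :=
    ((spectrum.isCompact x).union (spectrum.isCompact y)).isBounded.subset_Icc_sInf_sSup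
  choose p hp using fun n : ℕ ↦ exists_polynomial_near_of_continuousOn (sInf K) (sSup K) f
    hf.continuousOn (1 / (n + 1)) (by positivity)
  have hunif : TendstoUniformlyOn (fun n t ↦ (p n).eval t) f atTop K := by
    refine Metric.tendstoUniformlyOn_iff.mpr fun ε hε ↦ ?_
    obtain ⟨N, hN⟩ := exists_nat_one_div_lt hε
    filter_upwards [eventually_ge_atTop N] with n hn t ht
    rw [Real.dist_eq, abs_sub_comm]
    refine (hp n t (hK ht)).trans_le (hN.le.trans' ?_)
    gcongr
  have hlim (z : 𝒜) (hz : spectrum ℝ z ⊆ K) :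
      Tendsto (fun n ↦ cfc (fun t ↦ (p n).eval t) z) atTop (𝓝 (cfc f z)) :=
    tendsto_cfc_fun (hunif.mono hz) (Eventually.of_forall fun n ↦ by fun_prop)
  refine tendsto_nhds_unique ((hlim x Set.subset_union_left).const_mul a) ?_
  convert (hlim y Set.subset_union_right).mul_const a using 2 with n
  rw [cfc_polynomial _ x, cfc_polynomial _ y]
  exact h.aeval (p n)

end Intertwining

open scoped InnerProductSpace
open RCLike ContinuousLinearMap

section Operators

variable {H : Type*} [NormedAddCommGroup H] [InnerProductSpace ℂ H]

theorem re_inner_le_re_inner_of_le_s10 {S T : H →L[ℂ] H} (h : S ≤ T) (x : H) :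
    re ⟪S x, x⟫_ℂ ≤ re ⟪T x, x⟫_ℂ := by
  have := ((le_def S T).mp h).re_inner_nonneg_left x
  rwa [sub_apply, inner_sub_left, map_sub, sub_nonneg] at this

theorem re_inner_algebraMap_apply (r : ℝ) (x : H) :
    re ⟪algebraMap ℝ (H →L[ℂ] H) r x, x⟫_ℂ = r * ‖x‖ ^ 2 := by
  rw [Algebra.algebraMap_eq_smul_one, smul_apply, one_apply_eq_self,
    real_smul_eq_coe_smul (K := ℂ), inner_smul_real_left, smul_re, inner_self_eq_norm_sq]

theorem norm_inner_self_apply_le_opNorm (T : H →L[ℂ] H) {x : H} (hx : ‖x‖ = 1) :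
    ‖⟪T x, x⟫_ℂ‖ ≤ ‖T‖ :=
  calc ‖⟪T x, x⟫_ℂ‖ ≤ ‖T x‖ * ‖x‖ := norm_inner_le_norm _ _
    _ ≤ ‖T‖ * ‖x‖ * ‖x‖ := by gcongr; exact T.le_opNorm x
    _ = ‖T‖ := by rw [hx, mul_one, mul_one]

theorem norm_sq_apply_eq_re_inner_star_mul_self [CompleteSpace H] (T : H →L[ℂ] H) (x : H) :
    ‖T x‖ ^ 2 = re ⟪(star T * T) x, x⟫_ℂ := by
  rw [star_eq_adjoint]
  exact apply_norm_sq_eq_inner_adjoint_left T x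

theorem two_mul_norm_inner_le_re_inner_cfc [CompleteSpace H] (A : H →L[ℂ] H) {u : ℝ → ℝ}
    (hu : Continuous u) (hu_pos : ∀ t, 0 < u t) (x : H) :
    2 * ‖⟪A x, x⟫_ℂ‖ ≤
      re ⟪cfc u (star A * A) x, x⟫_ℂ + re ⟪cfc (fun t ↦ t / u t) (A * star A) x, x⟫_ℂ := by
  have hsqrt_pos (t : ℝ) : 0 < √(u t) := Real.sqrt_pos.mpr (hu_pos t)
  have hsqrt : Continuous fun t ↦ √(u t) := hu.sqrt
  have hsqrt_inv : Continuous fun t ↦ (√(u t))⁻¹ := hsqrt.inv₀ fun t ↦ (hsqrt_pos t).ne'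
  set P := cfc (fun t ↦ √(u t)) (star A * A)
  set Q := cfc (fun t ↦ (√(u t))⁻¹) (star A * A)
  have hQ : star Q = Q := (cfc_predicate _ _ : IsSelfAdjoint Q).star_eq
  have hP : star P = P := (cfc_predicate _ _ : IsSelfAdjoint P).star_eq
  have hQP : Q * P = 1 := by
    rw [← cfc_mul _ _ _ hsqrt_inv.continuousOn hsqrt.continuousOn,
      ← cfc_one ℝ (star A * A)]
    exact cfc_congr fun t _ ↦ inv_mul_cancel₀ (hsqrt_pos t).ne'
  have hPP : star P * P = cfc u (star A * A) := by
    rw [hP, ← cfc_mul _ _ _ hsqrt.continuousOn hsqrt.continuousOn]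
    exact cfc_congr fun t _ ↦ Real.mul_self_sqrt (hu_pos t).le
  have hQQ : star (Q * star A) * (Q * star A) = cfc (fun t ↦ t / u t) (A * star A) := by
    have hinv : Continuous fun t ↦ (u t)⁻¹ := hu.inv₀ fun t ↦ (hu_pos t).ne'
    have hQ2 : Q * Q = cfc (fun t ↦ (u t)⁻¹) (star A * A) := by
      rw [← cfc_mul _ _ _ hsqrt_inv.continuousOn hsqrt_inv.continuousOn]
      exact cfc_congr fun t _ ↦ by rw [← mul_inv, Real.mul_self_sqrt (hu_pos t).le]
    have hsemi : SemiconjBy A (star A * A) (A * star A) := (mul_assoc _ _ _).symm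
    calc star (Q * star A) * (Q * star A) = A * (Q * Q) * star A := by
          simp only [star_mul, star_star, hQ, mul_assoc]
      _ = cfc (fun t ↦ (u t)⁻¹) (A * star A) * (A * star A) := by
          rw [hQ2, (hsemi.cfc_real (.star_mul_self A) (.mul_star_self A) hinv).eq, mul_assoc]
      _ = cfc (fun t ↦ t / u t) (A * star A) := by
          conv_lhs => enter [2]; rw [← cfc_id' ℝ (A * star A)]
          rw [← cfc_mul _ _ _ hinv.continuousOn (by fun_prop)]
          exact cfc_congr fun t _ ↦ by rw [div_eq_inv_mul]
  have hinner : ⟪A x, x⟫_ℂ = ⟪P x, (Q * star A) x⟫_ℂ := by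
    have hA : A = (A * Q) * P := by rw [mul_assoc, hQP, mul_one]
    conv_lhs => rw [hA]
    rw [mul_apply_eq_comp, ← adjoint_inner_right, ← star_eq_adjoint, star_mul, hQ]
  calc 2 * ‖⟪A x, x⟫_ℂ‖ ≤ 2 * ‖P x‖ * ‖(Q * star A) x‖ := by
        rw [hinner, mul_assoc]; gcongr; exact norm_inner_le_norm _ _
    _ ≤ ‖P x‖ ^ 2 + ‖(Q * star A) x‖ ^ 2 := two_mul_le_add_sq _ _
    _ = _ := by
        rw [norm_sq_apply_eq_re_inner_star_mul_self, norm_sq_apply_eq_re_inner_star_mul_self,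
          hPP, hQQ]

theorem absOp_eq_cfc [CompleteSpace H] (A : H →L[ℂ] H) :
    absOp A = cfc Real.sqrt (star A * A) := by
  rw [absOp, star_eq_adjoint]

theorem absOp_adjoint_eq_cfc [CompleteSpace H] (A : H →L[ℂ] H) :
    absOp (adjoint A) = cfc Real.sqrt (A * star A) := by
  rw [absOp, adjoint_adjoint, star_eq_adjoint]

theorem absOp_nonneg [CompleteSpace H] (A : H →L[ℂ] H) : 0 ≤ absOp A :=
  cfc_nonneg fun t _ ↦ Real.sqrt_nonneg t

theorem two_mul_norm_inner_le_re_inner_absOp [CompleteSpace H] (A : H →L[ℂ] H) (x : H) :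
    2 * ‖⟪A x, x⟫_ℂ‖ ≤ re ⟪absOp A x, x⟫_ℂ + re ⟪absOp (adjoint A) x, x⟫_ℂ := by
  have hδ : ∀ δ > 0, 2 * ‖⟪A x, x⟫_ℂ‖ ≤
      re ⟪absOp A x, x⟫_ℂ + re ⟪absOp (adjoint A) x, x⟫_ℂ + δ * ‖x‖ ^ 2 := by
    intro δ hδ
    have hu := two_mul_norm_inner_le_re_inner_cfc A (u := fun t ↦ √t + δ) (by fun_prop)
      (fun t ↦ by positivity) x
    have hR : cfc (fun t ↦ √t + δ) (star A * A) = absOp A + algebraMap ℝ _ δ := by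
      rw [absOp_eq_cfc, cfc_add _ _ _ (by fun_prop) (by fun_prop), cfc_const δ (star A * A)]
    have hL : cfc (fun t ↦ t / (√t + δ)) (A * star A) ≤ absOp (adjoint A) := by
      rw [absOp_adjoint_eq_cfc]
      refine cfc_mono (fun t ht ↦ ?_) (by fun_prop (disch := intro t _; positivity)) (by fun_prop)
      have ht : 0 ≤ t := spectrum_nonneg_of_nonneg (mul_star_self_nonneg A) ht
      rw [div_le_iff₀ (by positivity)]
      nlinarith [Real.mul_self_sqrt ht, Real.sqrt_nonneg t]
    rw [hR, add_apply, inner_add_left, map_add, re_inner_algebraMap_apply] at hu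
    linarith [re_inner_le_re_inner_of_le_s10 hL x]
  refine le_of_forall_pos_le_add fun ε hε ↦ ?_
  have hεx : ε / (‖x‖ ^ 2 + 1) * ‖x‖ ^ 2 ≤ ε := by
    rw [div_mul_eq_mul_div, div_le_iff₀ (by positivity)]
    nlinarith [sq_nonneg ‖x‖]
  linarith [hδ (ε / (‖x‖ ^ 2 + 1)) (by positivity)]

theorem ConvexOn.map_re_inner_le_re_inner_cfc [CompleteSpace H] {φ : ℝ → ℝ}
    (hconv : ConvexOn ℝ (Set.Ici 0) φ) (hcont : ContinuousOn φ (Set.Ici 0)) {S : H →L[ℂ] H}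
    (hS : 0 ≤ S) {x : H} (hx : ‖x‖ = 1) : φ (re ⟪S x, x⟫_ℂ) ≤ re ⟪cfc φ S x, x⟫_ℂ := by
  have hspec : spectrum ℝ S ⊆ Set.Ici 0 := fun t ht ↦ spectrum_nonneg_of_nonneg hS ht
  have hSx : 0 ≤ re ⟪S x, x⟫_ℂ := ((nonneg_iff_isPositive S).mp hS).re_inner_nonneg_left x
  refine le_of_forall_lt_imp_le_of_dense fun a ha ↦ ?_
  obtain ⟨c, c', hle, rfl⟩ :=
    hconv.exists_affine_le_of_lt_real hSx ha isClosed_Ici hcont.lowerSemicontinuousOn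
  have hmono : cfc (fun t ↦ c * t + c') S ≤ cfc φ S :=
    cfc_mono (fun t ht ↦ hle t (hspec ht)) (by fun_prop) (hcont.mono hspec)
  have hcfc : cfc (fun t ↦ c * t + c') S = c • S + algebraMap ℝ _ c' := by
    rw [cfc_add _ _ _ (by fun_prop) (by fun_prop), cfc_const_mul _ _ _ (by fun_prop),
      cfc_id' ℝ S, cfc_const c' S]
  calc c * re ⟪S x, x⟫_ℂ + c' = re ⟪cfc (fun t ↦ c * t + c') S x, x⟫_ℂ := by
        rw [hcfc, add_apply, inner_add_left, map_add, re_inner_algebraMap_apply, hx, smul_apply,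
          real_smul_eq_coe_smul (K := ℂ), inner_smul_real_left, smul_re]
        ring
    _ ≤ re ⟪cfc φ S x, x⟫_ℂ := re_inner_le_re_inner_of_le_s10 hmono x

theorem IsOrliczFunction.map_norm_inner_le [CompleteSpace H] {φ : ℝ → ℝ}
    (hφ : IsOrliczFunction φ) (A : H →L[ℂ] H) {x : H} (hx : ‖x‖ = 1) :
    φ ‖⟪A x, x⟫_ℂ‖ ≤ 1 / 2 * ‖cfc φ (absOp A) + cfc φ (absOp (adjoint A))‖ := by
  obtain ⟨hconv, hcont, hmono, -, -, -⟩ := hφ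
  set T := cfc φ (absOp A) + cfc φ (absOp (adjoint A))
  set s := re ⟪absOp A x, x⟫_ℂ
  set t := re ⟪absOp (adjoint A) x, x⟫_ℂ
  have hs : 0 ≤ s := ((nonneg_iff_isPositive _).mp (absOp_nonneg A)).re_inner_nonneg_left x
  have ht : 0 ≤ t := ((nonneg_iff_isPositive _).mp (absOp_nonneg _)).re_inner_nonneg_left x
  calc φ ‖⟪A x, x⟫_ℂ‖ ≤ φ ((1 / 2) * s + (1 / 2) * t) :=
        hmono (norm_nonneg _) (Set.mem_Ici.mpr (by positivity))
          (by linarith [two_mul_norm_inner_le_re_inner_absOp A x])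
    _ ≤ 1 / 2 * φ s + 1 / 2 * φ t := hconv.2 hs ht (by norm_num) (by norm_num) (by norm_num)
    _ ≤ 1 / 2 * re ⟪T x, x⟫_ℂ := by
        rw [add_apply, inner_add_left, map_add, mul_add]
        gcongr
        · exact hconv.map_re_inner_le_re_inner_cfc hcont (absOp_nonneg A) hx
        · exact hconv.map_re_inner_le_re_inner_cfc hcont (absOp_nonneg _) hx
    _ ≤ 1 / 2 * ‖T‖ := by
        gcongr
        exact (re_le_norm _).trans (norm_inner_self_apply_le_opNorm T hx)

end Operators

variable {H : Type*} [NormedAddCommGroup H] [InnerProductSpace ℂ H] [CompleteSpace H]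

theorem stmt10 (A : H →L[ℂ] H) (φ : ℝ → ℝ) (hφ : IsOrliczFunction φ) :
    φ (numRad A) ≤
      (1 / 2) * ‖cfc φ (absOp A) + cfc φ (absOp (ContinuousLinearMap.adjoint A))‖ := by
  have hpointwise (x : {x : H // ‖x‖ = 1}) := hφ.map_norm_inner_le A x.2
  obtain ⟨-, hcont, hmono, hzero, -, -⟩ := hφ
  rcases isEmpty_or_nonempty {x : H // ‖x‖ = 1} with hH | hH
  · rw [numRad, Real.iSup_of_isEmpty, hzero]
    positivity
  · refine hmono.map_ciSup_le hcont (fun x ↦ norm_nonneg _) ⟨‖A‖, ?_⟩ hpointwise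
    rintro - ⟨x, rfl⟩
    exact norm_inner_self_apply_le_opNorm A x.2
end

section
/- Let A ∈ B(H), φ an Orlicz function, and α ∈ (0,1). Then φ(w(A)²) ≤ ‖α·φ(|A|^{1/α}) + (1−α)·φ(|A*|^{1/(1−α)})‖. -/
variable {H : Type*} [NormedAddCommGroup H] [InnerProductSpace ℂ H] [CompleteSpace H]

/-!
For a unit vector `x` let `ω T = Re ⟪T x, x⟫`. Writing `A = (A (|A| + ε)^{-1/2}) (|A| + ε)^{1/2}`,
Cauchy–Schwarz gives the mixed Schwarz inequality `|⟪A x, x⟫|² ≤ ω |A| · ω |A*|` as `ε → 0`, because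
`A (|A| + ε)⁻¹ A* ≤ |A*|`: its square lies below `A A*` and the square root is operator monotone.
Young's inequality and the convexity and monotonicity of `φ` bound `φ (ω |A| · ω |A*|)` by
`α φ ((ω |A|)^{1/α}) + (1 - α) φ ((ω |A*|)^{1/(1-α)})`, and Jensen's inequality `ψ (ω T) ≤ ω (ψ T)`,
applied to `t ^ p` and then to `φ`, bounds this by `ω (α φ(|A|^{1/α}) + (1-α) φ(|A*|^{1/(1-α)}))`,
which is at most the norm of that operator. Continuity of `φ` passes the bound to the supremum over
unit vectors `x`, the numerical radius.
-/

open Set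
open scoped InnerProductSpace Topology

lemma ConvexOn.exists_affine_le_of_monotoneOn {ψ : ℝ → ℝ} (hc : ConvexOn ℝ (Ici 0) ψ)
    (hm : MonotoneOn ψ (Ici 0)) {s : ℝ} (hs : 0 ≤ s) :
    ∃ c : ℝ, ∀ t, 0 ≤ t → ψ s + c * (t - s) ≤ ψ t := by
  rcases hs.eq_or_lt with rfl | hs
  · exact ⟨0, fun t ht => by simpa using hm (mem_Ici.2 le_rfl) ht ht⟩
  have hs' : s ∈ interior (Ici (0 : ℝ)) := by rwa [interior_Ici]
  refine ⟨derivWithin ψ (Ioi s) s, fun t ht => ?_⟩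
  rcases lt_trichotomy t s with hts | rfl | hst
  · have h := (hc.slope_le_leftDeriv_of_mem_interior ht hs' hts).trans
      (hc.leftDeriv_le_rightDeriv_of_mem_interior hs')
    rw [slope_def_field, div_le_iff₀ (sub_pos.2 hts)] at h
    linarith
  · simp
  · have h := hc.rightDeriv_le_slope_of_mem_interior hs' ht hst
    rw [slope_def_field, le_div_iff₀ (sub_pos.2 hst)] at h
    linarith

lemma ConvexOn.apply_mul_le_young {φ : ℝ → ℝ} (hc : ConvexOn ℝ (Ici 0) φ)
    (hm : MonotoneOn φ (Ici 0)) {α : ℝ} (hα : α ∈ Ioo (0 : ℝ) 1) {a b : ℝ} (ha : 0 ≤ a)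
    (hb : 0 ≤ b) :
    φ (a * b) ≤ α * φ (a ^ (1 / α)) + (1 - α) * φ (b ^ (1 / (1 - α))) := by
  have hα' : 0 < 1 - α := sub_pos.2 hα.2
  have hP := Real.rpow_nonneg ha (1 / α)
  have hQ := Real.rpow_nonneg hb (1 / (1 - α))
  have hyoung : a * b ≤ α * a ^ (1 / α) + (1 - α) * b ^ (1 / (1 - α)) := by
    have := Real.geom_mean_le_arith_mean2_weighted hα.1.le hα'.le hP hQ (by ring)
    simpa only [one_div, Real.rpow_inv_rpow ha hα.1.ne', Real.rpow_inv_rpow hb hα'.ne'] using this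
  calc φ (a * b) ≤ φ (α * a ^ (1 / α) + (1 - α) * b ^ (1 / (1 - α))) :=
        hm (mul_nonneg ha hb) (add_nonneg (mul_nonneg hα.1.le hP) (mul_nonneg hα'.le hQ)) hyoung
    _ ≤ α * φ (a ^ (1 / α)) + (1 - α) * φ (b ^ (1 / (1 - α))) :=
        hc.2 hP hQ hα.1.le hα'.le (by ring)

section Jensen

variable {A : Type*} [CStarAlgebra A] [PartialOrder A] [StarOrderedRing A]

theorem ConvexOn.le_map_cfc {ψ : ℝ → ℝ} (hc : ConvexOn ℝ (Ici 0) ψ)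
    (hcont : ContinuousOn ψ (Ici 0)) (hm : MonotoneOn ψ (Ici 0))
    (ω : A →ₚ[ℝ] ℝ) (hω : ω 1 = 1) {a : A} (ha : 0 ≤ a) : ψ (ω a) ≤ ω (cfc ψ a) := by
  have hspec : spectrum ℝ a ⊆ Ici 0 := fun t ht => spectrum_nonneg_of_nonneg ha ht
  -- `ψ` lies above its supporting line at `ω a`; apply `ω` to the resulting operator inequality.
  obtain ⟨c, hsupp⟩ := hc.exists_affine_le_of_monotoneOn hm (ω.map_nonneg ha)
  have hle : c • a + algebraMap ℝ A (ψ (ω a) - c * ω a) ≤ cfc ψ a := by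
    calc c • a + algebraMap ℝ A (ψ (ω a) - c * ω a)
        = cfc (fun t => c * t + (ψ (ω a) - c * ω a)) a := by
          rw [cfc_add .., cfc_const_mul .., cfc_id' .., cfc_const ..]
      _ ≤ cfc ψ a := cfc_mono (fun t ht => by linarith [hsupp t (hspec ht)])
          (by fun_prop) (hcont.mono hspec)
  have := OrderHomClass.mono ω hle
  simp only [map_add, map_smul, Algebra.algebraMap_eq_smul_one, hω, smul_eq_mul, mul_one] at this
  linarith

theorem ConvexOn.apply_rpow_le_map_cfc_cfc_rpow {ψ : ℝ → ℝ} (hc : ConvexOn ℝ (Ici 0) ψ)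
    (hcont : ContinuousOn ψ (Ici 0)) (hm : MonotoneOn ψ (Ici 0))
    (ω : A →ₚ[ℝ] ℝ) (hω : ω 1 = 1) {a : A} (ha : 0 ≤ a) {p : ℝ} (hp : 1 ≤ p) :
    ψ (ω a ^ p) ≤ ω (cfc ψ (cfc (fun t : ℝ => t ^ p) a)) := by
  have hp0 : 0 ≤ p := zero_le_one.trans hp
  have hpow : ω a ^ p ≤ ω (cfc (fun t : ℝ => t ^ p) a) :=
    (convexOn_rpow hp).le_map_cfc (Real.continuous_rpow_const hp0).continuousOn
      (Real.monotoneOn_rpow_Ici_of_exponent_nonneg hp0) ω hω ha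
  have hpow_nonneg : 0 ≤ cfc (fun t : ℝ => t ^ p) a := cfc_nonneg fun t _ => Real.rpow_nonneg
    (spectrum_nonneg_of_nonneg ha ‹_›) p
  exact (hm (Real.rpow_nonneg (ω.map_nonneg ha) p) (ω.map_nonneg hpow_nonneg) hpow).trans
    (hc.le_map_cfc hcont hm ω hω hpow_nonneg)

end Jensen

section Abs

variable {A : Type*} [CStarAlgebra A] [PartialOrder A] [StarOrderedRing A]

lemma CFC.abs_star_eq_sqrt (a : A) : CFC.abs (star a) = CFC.sqrt (a * star a) := by
  simp [CFC.abs]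

theorem CFC.mul_cfc_inv_mul_star_le_abs_star (a : A) {ε : ℝ} (hε : 0 < ε) :
    a * cfc (fun t => (t + ε)⁻¹) (CFC.abs a) * star a ≤ CFC.abs (star a) := by
  set b := cfc (fun t => (t + ε)⁻¹) (CFC.abs a)
  have hspec : ∀ t ∈ spectrum ℝ (CFC.abs a), 0 ≤ t := fun t ht =>
    spectrum_nonneg_of_nonneg (CFC.abs_nonneg a) ht
  have hinv : ContinuousOn (fun t : ℝ => (t + ε)⁻¹) (spectrum ℝ (CFC.abs a)) :=
    ContinuousOn.inv₀ (by fun_prop) fun t ht => by linarith [hspec t ht]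
  have hb : 0 ≤ b := cfc_nonneg fun t ht => by have := hspec t ht; positivity
  have hbab : b * (star a * a) * b ≤ 1 := by
    rw [← CFC.abs_mul_abs]
    calc b * (CFC.abs a * CFC.abs a) * b
        = cfc (fun t => (t + ε)⁻¹ * (t * t) * (t + ε)⁻¹) (CFC.abs a) := by
          rw [cfc_mul (fun t => (t + ε)⁻¹ * (t * t)) _ _ (hinv.mul (by fun_prop)) hinv,
            cfc_mul (fun t => (t + ε)⁻¹) (fun t => t * t) _ hinv,
            cfc_mul (fun t => t) (fun t => t) _, cfc_id' ..]
      _ ≤ 1 := cfc_le_one _ _ fun t ht => by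
          have := hspec t ht
          rw [mul_comm, ← mul_assoc, ← sq, ← sq, inv_pow, inv_mul_le_one₀ (by positivity)]
          gcongr
          linarith
  have hsq : (a * b * star a) ^ 2 ≤ a * star a := by
    calc (a * b * star a) ^ 2 = a * (b * (star a * a) * b) * star a := by
          simp only [sq, mul_assoc]
      _ ≤ a * 1 * star a := star_right_conjugate_le_conjugate hbab a
      _ = a * star a := by rw [mul_one]
  rw [CFC.abs_star_eq_sqrt, ← CFC.sqrt_sq (a * b * star a) (star_right_conjugate_nonneg hb a)]
  exact CFC.sqrt_le_sqrt _ _ hsq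

theorem CFC.exists_eq_star_mul_of_abs (a : A) {ε : ℝ} (hε : 0 < ε) :
    ∃ b c : A, a = star b * c ∧ star c * c = CFC.abs a + algebraMap ℝ A ε ∧
      star b * b ≤ CFC.abs (star a) := by
  have hpos : ∀ t ∈ spectrum ℝ (CFC.abs a), 0 < t + ε := fun t ht => by
    linarith [spectrum_nonneg_of_nonneg (CFC.abs_nonneg a) ht]
  set c := cfc (fun t => √(t + ε)) (CFC.abs a)
  set f := cfc (fun t => (√(t + ε))⁻¹) (CFC.abs a)
  have hf : ContinuousOn (fun t : ℝ => (√(t + ε))⁻¹) (spectrum ℝ (CFC.abs a)) :=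
    ContinuousOn.inv₀ (by fun_prop) fun t ht => (Real.sqrt_pos.2 (hpos t ht)).ne'
  have hfc : f * c = 1 := by
    rw [← cfc_mul _ _ _ hf, ← cfc_one ℝ (CFC.abs a)]
    exact cfc_congr fun t ht => inv_mul_cancel₀ (Real.sqrt_pos.2 (hpos t ht)).ne'
  have hcc : c * c = CFC.abs a + algebraMap ℝ A ε := by
    calc c * c = cfc (fun t => t + ε) (CFC.abs a) := by
          rw [← cfc_mul ..]
          exact cfc_congr fun t ht => Real.mul_self_sqrt (hpos t ht).le
      _ = CFC.abs a + algebraMap ℝ A ε := by rw [cfc_add .., cfc_id' .., cfc_const ..]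
  have hff : f * f = cfc (fun t => (t + ε)⁻¹) (CFC.abs a) := by
    rw [← cfc_mul _ _ _ hf hf]
    exact cfc_congr fun t ht => by rw [← mul_inv, Real.mul_self_sqrt (hpos t ht).le]
  refine ⟨star (a * f), c, ?_, ?_, ?_⟩
  · rw [star_star, mul_assoc, hfc, mul_one]
  · rw [(cfc_predicate _ _ : IsSelfAdjoint c).star_eq, hcc]
  · rw [star_star, star_mul, (cfc_predicate _ _ : IsSelfAdjoint f).star_eq,
      ← mul_assoc, mul_assoc a, hff]
    exact CFC.mul_cfc_inv_mul_star_le_abs_star a hε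

end Abs

section VectorState

variable {E : Type*} [NormedAddCommGroup E] [InnerProductSpace ℂ E]

noncomputable def vectorState (x : E) : (E →L[ℂ] E) →ₚ[ℝ] ℝ where
  toFun T := RCLike.re ⟪T x, x⟫_ℂ
  map_add' S T := by simp
  map_smul' r T := by simp
  monotone' S T h := by
    simpa [inner_sub_left] using ((ContinuousLinearMap.le_def S T).1 h).re_inner_nonneg_left x

lemma vectorState_apply (x : E) (T : E →L[ℂ] E) :
    vectorState x T = RCLike.re ⟪T x, x⟫_ℂ := rfl

lemma vectorState_one (x : E) : vectorState x 1 = ‖x‖ ^ 2 :=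
  inner_self_eq_norm_sq (𝕜 := ℂ) x

lemma vectorState_le_norm {x : E} (hx : ‖x‖ = 1) (T : E →L[ℂ] E) : vectorState x T ≤ ‖T‖ :=
  calc RCLike.re ⟪T x, x⟫_ℂ ≤ ‖T x‖ * ‖x‖ := re_inner_le_norm _ _
    _ ≤ ‖T‖ * ‖x‖ * ‖x‖ := by gcongr; exact T.le_opNorm x
    _ = ‖T‖ := by rw [hx, mul_one, mul_one]

lemma apply_numRad_le {f : ℝ → ℝ} (hf : ContinuousOn f (Ici 0)) {R : ℝ} (h0 : f 0 ≤ R)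
    (A : E →L[ℂ] E) (h : ∀ x : E, ‖x‖ = 1 → f ‖⟪A x, x⟫_ℂ‖ ≤ R) : f (numRad A) ≤ R := by
  rcases isEmpty_or_nonempty {x : E // ‖x‖ = 1} with hE | hE
  · rwa [numRad, Real.iSup_of_isEmpty]
  set g := fun x : {x : E // ‖x‖ = 1} => ‖⟪A x, x⟫_ℂ‖
  have hbdd : BddAbove (range g) := ⟨‖A‖, by
    rintro _ ⟨x, rfl⟩
    simpa [x.2] using (norm_inner_le_norm (A x) x).trans
      (mul_le_mul_of_nonneg_right (A.le_opNorm x) (norm_nonneg _))⟩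
  have hclosed : IsClosed (Ici 0 ∩ f ⁻¹' Iic R) :=
    hf.preimage_isClosed_of_isClosed isClosed_Ici isClosed_Iic
  have hsub : range g ⊆ Ici 0 ∩ f ⁻¹' Iic R := by
    rintro _ ⟨x, rfl⟩
    exact ⟨norm_nonneg _, h x x.2⟩
  exact (hclosed.closure_subset_iff.2 hsub (csSup_mem_closure (range_nonempty g) hbdd)).2

end VectorState

lemma vectorState_star_mul_self (x : H) (C : H →L[ℂ] H) :
    vectorState x (star C * C) = ‖C x‖ ^ 2 := by
  rw [ContinuousLinearMap.apply_norm_sq_eq_inner_adjoint_left]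
  rfl

lemma norm_inner_star_mul_sq_le (B C : H →L[ℂ] H) (x : H) :
    ‖⟪(star B * C) x, x⟫_ℂ‖ ^ 2 ≤ vectorState x (star C * C) * vectorState x (star B * B) := by
  have h : ⟪(star B * C) x, x⟫_ℂ = ⟪C x, B x⟫_ℂ :=
    ContinuousLinearMap.adjoint_inner_left B x (C x)
  rw [h, vectorState_star_mul_self, vectorState_star_mul_self, ← mul_pow]
  gcongr
  exact norm_inner_le_norm _ _

lemma absOp_eq_abs (A : H →L[ℂ] H) : absOp A = CFC.abs A := by
  rw [absOp, CFC.abs, CFC.sqrt_eq_real_sqrt _ (star_mul_self_nonneg A), cfcₙ_eq_cfc,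
    ContinuousLinearMap.star_eq_adjoint]

theorem norm_inner_sq_le_vectorState_abs (A : H →L[ℂ] H) (x : H) :
    ‖⟪A x, x⟫_ℂ‖ ^ 2 ≤ vectorState x (CFC.abs A) * vectorState x (CFC.abs (star A)) := by
  set a := vectorState x (CFC.abs A)
  set b := vectorState x (CFC.abs (star A))
  have hb : 0 ≤ b := (vectorState x).map_nonneg (CFC.abs_nonneg _)
  have key : ∀ ε > 0, ‖⟪A x, x⟫_ℂ‖ ^ 2 ≤ (a + ε * ‖x‖ ^ 2) * b := by
    intro ε hε
    obtain ⟨B, C, hA, hC, hB⟩ := CFC.exists_eq_star_mul_of_abs A hε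
    calc ‖⟪A x, x⟫_ℂ‖ ^ 2 ≤ vectorState x (star C * C) * vectorState x (star B * B) := by
          rw [hA]; exact norm_inner_star_mul_sq_le B C x
      _ ≤ (a + ε * ‖x‖ ^ 2) * b := by
          rw [hC, map_add, Algebra.algebraMap_eq_smul_one, map_smul, vectorState_one, smul_eq_mul]
          exact mul_le_mul_of_nonneg_left (OrderHomClass.mono _ hB)
            (add_nonneg ((vectorState x).map_nonneg (CFC.abs_nonneg A)) (by positivity))
  have hlim : Filter.Tendsto (fun ε => (a + ε * ‖x‖ ^ 2) * b) (𝓝[>] 0) (𝓝 (a * b)) := by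
    refine tendsto_nhdsWithin_of_tendsto_nhds ?_
    convert (by fun_prop : Continuous fun ε : ℝ => (a + ε * ‖x‖ ^ 2) * b).tendsto 0 using 2
    simp
  exact ge_of_tendsto hlim (eventually_nhdsWithin_of_forall key)

theorem apply_norm_inner_sq_le_vectorState {φ : ℝ → ℝ} (hc : ConvexOn ℝ (Ici 0) φ)
    (hcont : ContinuousOn φ (Ici 0)) (hm : MonotoneOn φ (Ici 0)) (A : H →L[ℂ] H) {α : ℝ}
    (hα : α ∈ Ioo (0 : ℝ) 1) {x : H} (hx : ‖x‖ = 1) :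
    φ (‖⟪A x, x⟫_ℂ‖ ^ 2) ≤ vectorState x
      (α • cfc φ (cfc (fun t : ℝ => t ^ (1 / α)) (CFC.abs A)) +
        (1 - α) • cfc φ (cfc (fun t : ℝ => t ^ (1 / (1 - α))) (CFC.abs (star A)))) := by
  set ω := vectorState x
  have hω : ω 1 = 1 := by rw [vectorState_one, hx, one_pow]
  have hp : 1 ≤ 1 / α := by rw [le_div_iff₀ hα.1, one_mul]; exact hα.2.le
  have hq : 1 ≤ 1 / (1 - α) := by rw [le_div_iff₀ (sub_pos.2 hα.2), one_mul]; linarith [hα.1]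
  have hA := hc.apply_rpow_le_map_cfc_cfc_rpow hcont hm ω hω (CFC.abs_nonneg A) hp
  have hA' := hc.apply_rpow_le_map_cfc_cfc_rpow hcont hm ω hω (CFC.abs_nonneg (star A)) hq
  calc φ (‖⟪A x, x⟫_ℂ‖ ^ 2) ≤ φ (ω (CFC.abs A) * ω (CFC.abs (star A))) :=
        hm (sq_nonneg ‖⟪A x, x⟫_ℂ‖) (mul_nonneg (ω.map_nonneg (CFC.abs_nonneg _))
          (ω.map_nonneg (CFC.abs_nonneg _))) (norm_inner_sq_le_vectorState_abs A x)
    _ ≤ α * φ (ω (CFC.abs A) ^ (1 / α)) + (1 - α) * φ (ω (CFC.abs (star A)) ^ (1 / (1 - α))) :=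
        hc.apply_mul_le_young hm hα (ω.map_nonneg (CFC.abs_nonneg _))
          (ω.map_nonneg (CFC.abs_nonneg _))
    _ ≤ _ := by
        rw [map_add, map_smul, map_smul, smul_eq_mul, smul_eq_mul]
        exact add_le_add (mul_le_mul_of_nonneg_left hA hα.1.le)
          (mul_le_mul_of_nonneg_left hA' (sub_nonneg.2 hα.2.le))

theorem stmt12 (A : H →L[ℂ] H) (φ : ℝ → ℝ) (hφ : IsOrliczFunction φ)
    (α : ℝ) (hα : α ∈ Set.Ioo (0 : ℝ) 1) :
    φ (numRad A ^ 2) ≤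
      ‖α • cfc φ (cfc (fun t : ℝ => t ^ (1 / α)) (absOp A)) +
        (1 - α) • cfc φ (cfc (fun t : ℝ => t ^ (1 / (1 - α)))
          (absOp (ContinuousLinearMap.adjoint A)))‖ := by
  obtain ⟨hc, hcont, hm, h0, -, -⟩ := hφ
  rw [absOp_eq_abs, absOp_eq_abs, ← ContinuousLinearMap.star_eq_adjoint]
  refine apply_numRad_le (f := fun t => φ (t ^ 2))
    (hcont.comp (continuous_pow 2).continuousOn fun t _ => sq_nonneg t)
    (by simp [h0]) A fun x hx => ?_
  exact (apply_norm_inner_sq_le_vectorState hc hcont hm A hα hx).trans (vectorState_le_norm hx _)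
end
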